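/- arXiv:1601.01974 — 6 statements merged into one kernel-verified Lean document; each statement's English description precedes it below -/
import Mathlib

section
/- For any nonnegative reals C, a_1, ..., a_T, the sum over t from 1 to T of min(a_t^2 / sqrt(sum_{i=1}^{t-1} a_i^2), C * a_t) is at most 3.5 * C * max_t a_t + 3.5 * sqrt(sum_{t=1}^T a_t^2). (Terms with zero denominator are interpreted via the min with C*a_t, i.e., when sum_{i<t} a_i^2 = 0 the term is bounded by C*a_t.) -/
/-!
Write `S t = ∑_{i<t} a_i²` and call `t` large when `S t ≤ a_t²`. At a small time `S (t+1) ≤ 2 S t`,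
so `√S (t+1) ≤ 3/2 √S t` and `a_t² / √S t ≤ 5/2 (√S (t+1) - √S t)`; these increments telescope to
at most `5/2 √S T`. At a large time `√S t ≤ a_t`, and then `5/2 √S t + a_t ≤ 5/2 √S (t+1)` because
`2 · 5/2 ≤ (5/2)² - 1`; so the large `a_t` before `n` sum to at most `5/2 √S n`, and adding the
last large `a_t` to the bound at its own time gives at most `(5/2 + 1) max a`.
-/

open Finset Real

noncomputable def prefixSqSum (a : ℕ → ℝ) (t : ℕ) : ℝ := ∑ i ∈ range t, a i ^ 2

lemma prefixSqSum_zero (a : ℕ → ℝ) : prefixSqSum a 0 = 0 :=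
  sum_range_zero _

lemma prefixSqSum_succ (a : ℕ → ℝ) (t : ℕ) : prefixSqSum a (t + 1) = prefixSqSum a t + a t ^ 2 :=
  sum_range_succ _ t

lemma prefixSqSum_nonneg (a : ℕ → ℝ) (t : ℕ) : 0 ≤ prefixSqSum a t :=
  sum_nonneg fun _ _ => sq_nonneg _

lemma monotone_prefixSqSum (a : ℕ → ℝ) : Monotone (prefixSqSum a) :=
  monotone_nat_of_le_succ fun t => by
    rw [prefixSqSum_succ]; exact le_add_of_nonneg_right (sq_nonneg _)

lemma div_sqrt_le_sqrt_add_sub_sqrt {s x : ℝ} (hs : 0 < s) (hx : 0 ≤ x) (hxs : x ≤ s) :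
    x / √s ≤ 5 / 2 * (√(s + x) - √s) := by
  have hu : 0 < √s := sqrt_pos.2 hs
  have hu2 : √s ^ 2 = s := sq_sqrt hs.le
  have hv2 : √(s + x) ^ 2 = s + x := sq_sqrt (by linarith)
  have huv : √s ≤ √(s + x) := sqrt_le_sqrt (by linarith)
  have hv : √(s + x) ≤ 3 / 2 * √s := by nlinarith
  rw [div_le_iff₀ hu]
  nlinarith

lemma sqrt_add_le_sqrt_add_sq {s b : ℝ} (hs : 0 ≤ s) (hb : 0 ≤ b) (hsb : s ≤ b ^ 2) :
    5 / 2 * √s + b ≤ 5 / 2 * √(s + b ^ 2) := by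
  have hu2 : √s ^ 2 = s := sq_sqrt hs
  have hw2 : √(s + b ^ 2) ^ 2 = s + b ^ 2 := sq_sqrt (by positivity)
  have hub : √s ≤ b := (sqrt_le_left hb).2 hsb
  nlinarith [sqrt_nonneg s, sqrt_nonneg (s + b ^ 2)]

lemma sum_sub_le_of_subset_range {f : ℕ → ℝ} (hf : Monotone f) {s : Finset ℕ} {n : ℕ}
    (hs : s ⊆ range n) : ∑ t ∈ s, (f (t + 1) - f t) ≤ f n - f 0 := by
  calc ∑ t ∈ s, (f (t + 1) - f t) ≤ ∑ t ∈ range n, (f (t + 1) - f t) :=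
        sum_le_sum_of_subset_of_nonneg hs fun t _ _ => sub_nonneg.2 (hf t.le_succ)
    _ = f n - f 0 := sum_range_sub f n

section

variable {a : ℕ → ℝ}

lemma sum_large_le_sqrt_prefixSqSum (ha : ∀ t, 0 ≤ a t) (n : ℕ) :
    ∑ t ∈ range n with prefixSqSum a t ≤ a t ^ 2, a t ≤ 5 / 2 * √(prefixSqSum a n) := by
  induction n with
  | zero => simp
  | succ n ih =>
    rw [range_add_one, filter_insert]
    split_ifs with hlarge
    · rw [sum_insert (by simp), prefixSqSum_succ]
      linarith [sqrt_add_le_sqrt_add_sq (prefixSqSum_nonneg a n) (ha n) hlarge]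
    · exact ih.trans (by gcongr; exact monotone_prefixSqSum a n.le_succ)

lemma sum_large_le_of_le (ha : ∀ t, 0 ≤ a t) {n : ℕ} {M : ℝ} (hM0 : 0 ≤ M)
    (hM : ∀ t < n, a t ≤ M) :
    ∑ t ∈ range n with prefixSqSum a t ≤ a t ^ 2, a t ≤ 7 / 2 * M := by
  induction n with
  | zero => simpa using hM0
  | succ n ih =>
    rw [range_add_one, filter_insert]
    split_ifs with hlarge
    · rw [sum_insert (by simp)]
      have hsqrt : √(prefixSqSum a n) ≤ a n := (sqrt_le_left (ha n)).2 hlarge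
      linarith [sum_large_le_sqrt_prefixSqSum ha n, hM n n.lt_succ_self]
    · exact ih fun t ht => hM t (ht.trans n.lt_succ_self)

end

noncomputable def clippedTerm (C : ℝ) (a : ℕ → ℝ) (t : ℕ) : ℝ :=
  if prefixSqSum a t = 0 then C * a t else min (a t ^ 2 / √(prefixSqSum a t)) (C * a t)

lemma clippedTerm_le_mul (C : ℝ) (a : ℕ → ℝ) (t : ℕ) : clippedTerm C a t ≤ C * a t := by
  unfold clippedTerm
  split_ifs
  exacts [le_rfl, min_le_right _ _]

lemma clippedTerm_le_of_sq_lt {C : ℝ} {a : ℕ → ℝ} {t : ℕ} (hsmall : a t ^ 2 < prefixSqSum a t) :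
    clippedTerm C a t ≤ 5 / 2 * (√(prefixSqSum a (t + 1)) - √(prefixSqSum a t)) := by
  have hS : 0 < prefixSqSum a t := (sq_nonneg _).trans_lt hsmall
  rw [clippedTerm, if_neg hS.ne', prefixSqSum_succ]
  exact (min_le_left _ _).trans (div_sqrt_le_sqrt_add_sub_sqrt hS (sq_nonneg _) hsmall.le)

lemma sum_clippedTerm_large_le {C : ℝ} (hC : 0 ≤ C) {a : ℕ → ℝ} (ha : ∀ t, 0 ≤ a t) {n : ℕ}
    {M : ℝ} (hM0 : 0 ≤ M) (hM : ∀ t < n, a t ≤ M) :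
    ∑ t ∈ range n with prefixSqSum a t ≤ a t ^ 2, clippedTerm C a t ≤ 7 / 2 * C * M := by
  calc _ ≤ ∑ t ∈ range n with prefixSqSum a t ≤ a t ^ 2, C * a t :=
        sum_le_sum fun t _ => clippedTerm_le_mul C a t
    _ ≤ C * (7 / 2 * M) := by
        rw [← mul_sum]
        exact mul_le_mul_of_nonneg_left (sum_large_le_of_le ha hM0 hM) hC
    _ = 7 / 2 * C * M := by ring

lemma sum_clippedTerm_small_le (C : ℝ) (a : ℕ → ℝ) (n : ℕ) :
    ∑ t ∈ range n with ¬prefixSqSum a t ≤ a t ^ 2, clippedTerm C a t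
      ≤ 5 / 2 * √(prefixSqSum a n) := by
  calc _ ≤ ∑ t ∈ range n with ¬prefixSqSum a t ≤ a t ^ 2,
          5 / 2 * (√(prefixSqSum a (t + 1)) - √(prefixSqSum a t)) :=
        sum_le_sum fun t ht => clippedTerm_le_of_sq_lt (not_le.1 (mem_filter.1 ht).2)
    _ ≤ 5 / 2 * (√(prefixSqSum a n) - √(prefixSqSum a 0)) := by
        rw [← mul_sum]
        gcongr
        exact sum_sub_le_of_subset_range (fun _ _ h => sqrt_le_sqrt (monotone_prefixSqSum a h))
          (filter_subset _ _)
    _ = 5 / 2 * √(prefixSqSum a n) := by rw [prefixSqSum_zero, sqrt_zero, sub_zero]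

/-- Useful Inequality (Lemma 1): for nonnegative `C, a_1, ..., a_T`,
`∑_t min(a_t² / √(∑_{i<t} a_i²), C·a_t) ≤ 3.5·C·max_t a_t + 3.5·√(∑_t a_t²)`,
where a term with zero denominator is interpreted as `C·a_t`. -/
theorem useful_inequality (T : ℕ) (hT : 0 < T) (C : ℝ) (hC : 0 ≤ C)
    (a : ℕ → ℝ) (ha : ∀ t, 0 ≤ a t) :
    ∑ t ∈ Finset.range T,
      (if (∑ i ∈ Finset.range t, (a i) ^ 2) = 0 then C * a t
       else min ((a t) ^ 2 / Real.sqrt (∑ i ∈ Finset.range t, (a i) ^ 2)) (C * a t))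
    ≤ 3.5 * C * ((Finset.range T).sup' (Finset.nonempty_range_iff.mpr hT.ne') a)
      + 3.5 * Real.sqrt (∑ t ∈ Finset.range T, (a t) ^ 2) := by
  set M := (range T).sup' (nonempty_range_iff.mpr hT.ne') a
  have hM : ∀ t < T, a t ≤ M := fun t ht => le_sup' a (mem_range.2 ht)
  change ∑ t ∈ range T, clippedTerm C a t ≤ 3.5 * C * M + 3.5 * √(prefixSqSum a T)
  rw [← sum_filter_add_sum_filter_not _ fun t => prefixSqSum a t ≤ a t ^ 2]
  have hlarge := sum_clippedTerm_large_le hC ha ((ha 0).trans (hM 0 hT)) hM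
  have hsmall := sum_clippedTerm_small_le C a T
  linarith [sqrt_nonneg (prefixSqSum a T)]
end

section
/- Let {a_t} be a sequence of nonnegative reals and {Delta_t} a sequence of nonnegative reals with Delta_0 = 0 and Delta_t <= Delta_{t-1} + min(a_t, a_t^2 / Delta_{t-1}) for all t >= 1 (with the convention that when Delta_{t-1} = 0 the bound is Delta_t <= a_t). Then for all T >= 0, Delta_T <= sqrt(3 * sum_{t=1}^T a_t^2). -/
/-! The increment `b = min(a, a²/Δ)` satisfies `b ≤ a` and `Δ b ≤ a²`, so squaring the recurrence
gives `Δ_{t+1}² ≤ Δ_t² + 3 a_{t+1}²`, which telescopes from `Δ_0 = 0`. -/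

open Finset

theorem Finset.le_sum_Icc_of_le_add {α : Type*} [AddCommMonoid α] [PartialOrder α]
    [IsOrderedAddMonoid α] {f g : ℕ → α} (h0 : f 0 ≤ 0) (hstep : ∀ t, f (t + 1) ≤ f t + g (t + 1))
    (T : ℕ) : f T ≤ ∑ t ∈ Icc 1 T, g t := by
  induction T with
  | zero => simpa using h0
  | succ n ih =>
    rw [sum_Icc_succ_top (Nat.le_add_left 1 n)]
    exact (hstep n).trans (add_le_add ih le_rfl)

/-- Expanding the square, `2 x b ≤ 2 a²` and `b² ≤ a²`. -/
theorem sq_add_le_sq_add_three_mul_sq {x b a : ℝ} (hb : 0 ≤ b) (hba : b ≤ a)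
    (hxb : x * b ≤ a ^ 2) : (x + b) ^ 2 ≤ x ^ 2 + 3 * a ^ 2 := by
  nlinarith [mul_le_mul hba hba hb (hb.trans hba)]

section Increment

variable {x a : ℝ}

theorem increment_nonneg (hx : 0 ≤ x) (ha : 0 ≤ a) :
    0 ≤ if x = 0 then a else min a (a ^ 2 / x) := by
  split_ifs
  · exact ha
  · exact le_min ha (by positivity)

theorem increment_le : (if x = 0 then a else min a (a ^ 2 / x)) ≤ a := by
  split_ifs
  · exact le_rfl
  · exact min_le_left _ _

theorem mul_increment_le (hx : 0 ≤ x) :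
    x * (if x = 0 then a else min a (a ^ 2 / x)) ≤ a ^ 2 := by
  split_ifs with h
  · simp [h, sq_nonneg]
  · calc x * min a (a ^ 2 / x) ≤ x * (a ^ 2 / x) := mul_le_mul_of_nonneg_left (min_le_right _ _) hx
      _ = a ^ 2 := mul_div_cancel₀ _ h

theorem add_increment_sq_le (hx : 0 ≤ x) (ha : 0 ≤ a) :
    (x + if x = 0 then a else min a (a ^ 2 / x)) ^ 2 ≤ x ^ 2 + 3 * a ^ 2 :=
  sq_add_le_sq_add_three_mul_sq (increment_nonneg hx ha) increment_le (mul_increment_le hx)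

end Increment

/-- Lemma 5 (Solution of the AdaFTRL Recurrence): if `Δ_0 = 0` and
`Δ_t ≤ Δ_{t-1} + min(a_t, a_t² / Δ_{t-1})` (with the term interpreted as `a_t`
when `Δ_{t-1} = 0`), then `Δ_T ≤ √(3 ∑_{t=1}^T a_t²)`. -/
theorem recurrence_solution (a Δ : ℕ → ℝ) (ha : ∀ t, 0 ≤ a t) (hΔ : ∀ t, 0 ≤ Δ t)
    (h0 : Δ 0 = 0)
    (hrec : ∀ t : ℕ, Δ (t + 1) ≤ Δ t +
      (if Δ t = 0 then a (t + 1) else min (a (t + 1)) ((a (t + 1)) ^ 2 / Δ t))) :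
    ∀ T : ℕ, Δ T ≤ Real.sqrt (3 * ∑ t ∈ Finset.Icc 1 T, (a t) ^ 2) := by
  intro T
  have hstep : ∀ t, Δ (t + 1) ^ 2 ≤ Δ t ^ 2 + 3 * a (t + 1) ^ 2 := fun t =>
    (pow_le_pow_left₀ (hΔ _) (hrec t) 2).trans (add_increment_sq_le (hΔ t) (ha _))
  have hsq : Δ T ^ 2 ≤ 3 * ∑ t ∈ Icc 1 T, a t ^ 2 := by
    rw [mul_sum]
    exact le_sum_Icc_of_le_add (f := fun t => Δ t ^ 2) (by simp [h0]) hstep T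
  exact Real.le_sqrt_of_sq_le hsq
end

section
/- Let f : K -> R be lambda-strongly convex (lambda > 0) and lower semi-continuous on a nonempty closed convex set K in a finite-dimensional normed space, and let f* be its Fenchel conjugate f*(l) = sup_{w in K} (<l, w> - f(w)). Then f* is (1/lambda)-strongly smooth: for all x, y in the dual space, B_{f*}(x, y) <= (1/(2*lambda)) * ||x - y||_*^2, where B_{f*} is the Bregman divergence of f*. -/
/-!
Write `p = ∇f*(y)` for the minimizer of `f - y` over `K`, so that `f*(y) = y p - f p`.
Strong convexity makes `f - y` grow quadratically away from its minimizer: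
`f w - y w ≥ f p - y p + λ/2 ‖w - p‖²`. Hence for every `w ∈ K`,
`x w - f w ≤ f*(y) + (x - y) p + ‖x - y‖_* ‖w - p‖ - λ/2 ‖w - p‖²`,
and maximizing the right-hand side over `‖w - p‖` gives the bound `‖x - y‖_*² / (2λ)`.
-/

open Filter Topology

section StrongConvexity

variable {E : Type*} [NormedAddCommGroup E] [NormedSpace ℝ E]

noncomputable def conjugateOn (K : Set E) (f : E → ℝ) (l : E →L[ℝ] ℝ) : ℝ :=
  sSup ((fun w => l w - f w) '' K)

lemma mul_sub_mul_sq_le_sq_div {m : ℝ} (hm : 0 < m) (a d : ℝ) :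
    a * d - m / 2 * d ^ 2 ≤ a ^ 2 / (2 * m) := by
  rw [le_div_iff₀ (by positivity)]
  nlinarith [sq_nonneg (a - m * d)]

lemma StrongConvexOn.sub_continuousLinearMap {K : Set E} {m : ℝ} {f : E → ℝ}
    (hf : StrongConvexOn K m f) (l : E →L[ℝ] ℝ) : StrongConvexOn K m (f - ⇑l) := by
  have h := hf.sub ((l : E →ₗ[ℝ] ℝ).concaveOn hf.1).uniformConcaveOn_zero
  rwa [add_zero] at h

lemma UniformConvexOn.add_le_of_isMinOn {K : Set E} {φ : ℝ → ℝ} {f : E → ℝ}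
    (hf : UniformConvexOn K φ f) {p : E} (hp : p ∈ K) (hmin : IsMinOn f K p)
    {w : E} (hw : w ∈ K) : f p + φ ‖w - p‖ ≤ f w := by
  have hsegment : ∀ t ∈ Set.Ioo (0 : ℝ) 1, (1 - t) * φ ‖w - p‖ ≤ f w - f p := by
    rintro t ⟨ht0, ht1⟩
    have hconv := hf.2 hw hp ht0.le (sub_nonneg.2 ht1.le) (add_sub_cancel t 1)
    have hle := isMinOn_iff.1 hmin _ <|
      hf.1 hw hp ht0.le (sub_nonneg.2 ht1.le) (add_sub_cancel t 1)
    simp only [smul_eq_mul] at hconv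
    refine le_of_mul_le_mul_left ?_ ht0
    nlinarith
  have hlim : Tendsto (fun t : ℝ => (1 - t) * φ ‖w - p‖) (𝓝[>] 0) (𝓝 (φ ‖w - p‖)) := by
    have h := ((continuous_const.sub continuous_id).mul continuous_const).tendsto
      (f := fun t : ℝ => (1 - t) * φ ‖w - p‖) 0
    simp only [sub_zero, one_mul] at h
    exact h.mono_left nhdsWithin_le_nhds
  have hgrowth : φ ‖w - p‖ ≤ f w - f p :=
    le_of_tendsto hlim (mem_of_superset (Ioo_mem_nhdsGT one_pos) hsegment)
  linarith

lemma conjugateOn_eq_of_isMinOn {K : Set E} {f : E → ℝ} {l : E →L[ℝ] ℝ} {p : E}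
    (hp : p ∈ K) (hmin : IsMinOn (f - ⇑l) K p) : conjugateOn K f l = l p - f p := by
  refine IsGreatest.csSup_eq ⟨⟨p, hp, rfl⟩, ?_⟩
  rintro _ ⟨w, hw, rfl⟩
  have := isMinOn_iff.1 hmin w hw
  simp only [Pi.sub_apply] at this
  linarith

lemma StrongConvexOn.conjugateOn_sub_le {K : Set E} {m : ℝ} {f : E → ℝ}
    (hf : StrongConvexOn K m f) (hm : 0 < m) {x y : E →L[ℝ] ℝ} {p : E} (hp : p ∈ K)
    (hmin : IsMinOn (f - ⇑y) K p) :
    conjugateOn K f x - conjugateOn K f y - (x - y) p ≤ ‖x - y‖ ^ 2 / (2 * m) := by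
  rw [conjugateOn_eq_of_isMinOn hp hmin, sub_le_iff_le_add, sub_le_iff_le_add]
  refine csSup_le ⟨_, p, hp, rfl⟩ ?_
  rintro _ ⟨w, hw, rfl⟩
  have hgrowth : f p - y p + m / 2 * ‖w - p‖ ^ 2 ≤ f w - y w :=
    UniformConvexOn.add_le_of_isMinOn (hf.sub_continuousLinearMap y) hp hmin hw
  have hdual : (x - y) (w - p) ≤ ‖x - y‖ * ‖w - p‖ :=
    (le_abs_self _).trans ((x - y).le_opNorm _)
  have hquad := mul_sub_mul_sq_le_sq_div hm ‖x - y‖ ‖w - p‖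
  simp only [map_sub, sub_apply] at hdual ⊢
  linarith

end StrongConvexity

theorem conjugate_strongly_smooth_general {E : Type*} [NormedAddCommGroup E] [NormedSpace ℝ E]
    (K : Set E)
    (lam : ℝ) (hlam : 0 < lam)
    (f : E → ℝ) (hsc : StrongConvexOn K lam f)
    (fstar : (E →L[ℝ] ℝ) → ℝ)
    (hfstar : ∀ l : E →L[ℝ] ℝ, fstar l = sSup ((fun w => l w - f w) '' K))
    (g : (E →L[ℝ] ℝ) → E)
    (hgmem : ∀ l, g l ∈ K)
    (hgmin : ∀ l : E →L[ℝ] ℝ, ∀ w ∈ K, f (g l) - l (g l) ≤ f w - l w)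
    (x y : E →L[ℝ] ℝ) :
    fstar x - fstar y - (x - y) (g y) ≤ ‖x - y‖ ^ 2 / (2 * lam) := by
  rw [show fstar = conjugateOn K f from funext hfstar]
  exact hsc.conjugateOn_sub_le hlam (hgmem y) (isMinOn_iff.2 (hgmin y))

/-- Property 4 of Proposition 2: the Fenchel conjugate (over `K`) of a `λ`-strongly convex
lower semicontinuous function is `1/λ`-strongly smooth:
`B_{f*}(x,y) ≤ ‖x - y‖_*² / (2λ)`, where `∇f*(y)` is the argmin of `f - y` over `K`. -/
theorem conjugate_strongly_smooth {E : Type*} [NormedAddCommGroup E] [NormedSpace ℝ E]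
    [FiniteDimensional ℝ E]
    (K : Set E) (hKne : K.Nonempty) (hKcl : IsClosed K) (hKconv : Convex ℝ K)
    (lam : ℝ) (hlam : 0 < lam)
    (f : E → ℝ) (hsc : StrongConvexOn K lam f) (hlsc : LowerSemicontinuousOn f K)
    (fstar : (E →L[ℝ] ℝ) → ℝ)
    (hfstar : ∀ l : E →L[ℝ] ℝ, fstar l = sSup ((fun w => l w - f w) '' K))
    (g : (E →L[ℝ] ℝ) → E)
    (hgmem : ∀ l, g l ∈ K)
    (hgmin : ∀ l : E →L[ℝ] ℝ, ∀ w ∈ K, f (g l) - l (g l) ≤ f w - l w)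
    (x y : E →L[ℝ] ℝ) :
    fstar x - fstar y - (x - y) (g y) ≤ ‖x - y‖ ^ 2 / (2 * lam) :=
  conjugate_strongly_smooth_general K lam hlam f hsc fstar hfstar g hgmem hgmin x y
end

section
/- Let f : K -> R be lambda-strongly convex and lower semi-continuous on a nonempty closed convex set K with diameter D = sup_{u,v in K}||u - v||. Then the Bregman divergence of the Fenchel conjugate satisfies B_{f*}(x, y) <= D * ||x - y||_* for all x, y in the dual space. -/
/-! The conjugate is attained at the minimiser `g y` of `f - y`, so `B_{f*}(x, y)` is the gap
between `sup_K (x - f)` and the value of `x - f` at `g y`. For `w ∈ K` that gap is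
`(x - f)(w) - (x - f)(g y) = [(y - f)(w) - (y - f)(g y)] + (x - y)(w - g y)`; the bracket is
nonpositive by minimality and the last term is at most `‖x - y‖ ‖w - g y‖ ≤ ‖x - y‖ D`. -/

theorem IsMaxOn.csSup_image_eq {α β : Type*} [ConditionallyCompleteLattice β] {φ : α → β}
    {s : Set α} {a : α} (hφ : IsMaxOn φ s a) (ha : a ∈ s) : sSup (φ '' s) = φ a :=
  IsGreatest.csSup_eq ⟨Set.mem_image_of_mem φ ha, Set.forall_mem_image.2 (isMaxOn_iff.1 hφ)⟩

section

variable {E : Type*} [NormedAddCommGroup E] [NormedSpace ℝ E]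

theorem csSup_image_sub_le_of_isMaxOn {K : Set E} {f : E → ℝ} {y : E →L[ℝ] ℝ} {a : E} {D : ℝ}
    (ha : a ∈ K) (hmax : IsMaxOn (fun w => y w - f w) K a) (hD : ∀ w ∈ K, ‖w - a‖ ≤ D)
    (x : E →L[ℝ] ℝ) :
    sSup ((fun w => x w - f w) '' K) ≤ x a - f a + D * ‖x - y‖ := by
  refine csSup_le ⟨_, Set.mem_image_of_mem _ ha⟩ (Set.forall_mem_image.2 fun w hw => ?_)
  have hgap : y w - f w ≤ y a - f a := isMaxOn_iff.1 hmax w hw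
  have hpert : (x - y) (w - a) ≤ ‖x - y‖ * D :=
    (le_abs_self _).trans ((x - y).le_opNorm_of_le (hD w hw))
  simp only [sub_apply, map_sub] at hpert
  linarith

end

theorem conjugate_bregman_le_diam_general {E : Type*} [NormedAddCommGroup E] [NormedSpace ℝ E]
    (K : Set E)
    (D : ℝ) (hD : ∀ u ∈ K, ∀ v ∈ K, ‖u - v‖ ≤ D)
    (f : E → ℝ)
    (fstar : (E →L[ℝ] ℝ) → ℝ)
    (hfstar : ∀ l : E →L[ℝ] ℝ, fstar l = sSup ((fun w => l w - f w) '' K))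
    (g : (E →L[ℝ] ℝ) → E)
    (hgmem : ∀ l, g l ∈ K)
    (hgmin : ∀ l : E →L[ℝ] ℝ, ∀ w ∈ K, f (g l) - l (g l) ≤ f w - l w)
    (x y : E →L[ℝ] ℝ) :
    fstar x - fstar y - (x - y) (g y) ≤ D * ‖x - y‖ := by
  have hmax : IsMaxOn (fun w => y w - f w) K (g y) :=
    isMaxOn_iff.2 fun w hw => by linarith [hgmin y w hw]
  have hfy : fstar y = y (g y) - f (g y) := (hfstar y).trans (hmax.csSup_image_eq (hgmem y))
  have hfx : fstar x ≤ x (g y) - f (g y) + D * ‖x - y‖ :=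
    (hfstar x).trans_le
      (csSup_image_sub_le_of_isMaxOn (hgmem y) hmax (fun w hw => hD w hw _ (hgmem y)) x)
  rw [sub_apply]
  linarith

/-- Property 6 of Proposition 2: for `f` `λ`-strongly convex and lower semicontinuous on a
nonempty closed convex set `K` with diameter `D`, the Bregman divergence of the Fenchel
conjugate satisfies `B_{f*}(x,y) ≤ D ‖x - y‖_*`. -/
theorem conjugate_bregman_le_diam {E : Type*} [NormedAddCommGroup E] [NormedSpace ℝ E]
    [FiniteDimensional ℝ E]
    (K : Set E) (hKne : K.Nonempty) (hKcl : IsClosed K) (hKconv : Convex ℝ K)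
    (D : ℝ) (hD : ∀ u ∈ K, ∀ v ∈ K, ‖u - v‖ ≤ D)
    (lam : ℝ) (hlam : 0 < lam)
    (f : E → ℝ) (hsc : StrongConvexOn K lam f) (hlsc : LowerSemicontinuousOn f K)
    (fstar : (E →L[ℝ] ℝ) → ℝ)
    (hfstar : ∀ l : E →L[ℝ] ℝ, fstar l = sSup ((fun w => l w - f w) '' K))
    (g : (E →L[ℝ] ℝ) → E)
    (hgmem : ∀ l, g l ∈ K)
    (hgmin : ∀ l : E →L[ℝ] ℝ, ∀ w ∈ K, f (g l) - l (g l) ≤ f w - l w)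
    (x y : E →L[ℝ] ℝ) :
    fstar x - fstar y - (x - y) (g y) ≤ D * ‖x - y‖ :=
  conjugate_bregman_le_diam_general K D hD f fstar hfstar g hgmem hgmin x y
end

section
/- Consider the FTRL algorithm on a nonempty closed convex set K which at round t plays w_t = argmin_{w in K}(<L_{t-1}, w> + R_t(w)) where L_t = l_1 + ... + l_t and each R_t : K -> R is strongly convex and lower semi-continuous. Then for any u in K, the regret sum_{t=1}^T <l_t, w_t - u> is at most R_{T+1}(u) + R_1*(0) + sum_{t=1}^T [B_{R_t*}(-L_t, -L_{t-1}) - R_t*(-L_t) + R_{t+1}*(-L_t)]. -/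
open Finset

/-!
Unwinding the Bregman divergence `B_{R_t*}(-L_t, -L_{t-1})` with `L_t - L_{t-1} = ℓ_t`, the summand
of the bound becomes `ℓ_t(w_t) + R_{t+1}*(-L_t) - R_t*(-L_{t-1})`, so the sum telescopes to
`∑ ℓ_t(w_t) + R_{T+1}*(-L_T) - R_1*(0)`. The claim then reduces to the Fenchel–Young inequality
`-L_T(u) ≤ R_{T+1}(u) + R_{T+1}*(-L_T)`; the supremum defining `R_{T+1}*(-L_T)` is a genuine one
(not Lean's junk value for unbounded sets) because the FTRL minimality of `w_{T+1}` bounds it above.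
-/

section FTRL

variable {E : Type*} [AddCommGroup E] [Module ℝ E] [TopologicalSpace E]

theorem neg_apply_le_add_sSup_image_of_isMinOn {K : Set E} {l : E →L[ℝ] ℝ} {R : E → ℝ} {a u : E}
    (hmin : IsMinOn (fun v => l v + R v) K a) (hu : u ∈ K) :
    -l u ≤ R u + sSup ((fun v => (-l) v - R v) '' K) := by
  have hbdd : BddAbove ((fun v => (-l) v - R v) '' K) := by
    refine ⟨(-l) a - R a, Set.forall_mem_image.2 fun v hv => ?_⟩
    have := isMinOn_iff.1 hmin v hv
    simp only [neg_apply]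
    linarith
  have := le_csSup hbdd (Set.mem_image_of_mem _ hu)
  rw [neg_apply] at this
  linarith

theorem sum_bregman_add_conjugate_eq {ℓ L : ℕ → (E →L[ℝ] ℝ)}
    (hL : ∀ t, L t = ∑ i ∈ Icc 1 t, ℓ i) (F : ℕ → (E →L[ℝ] ℝ) → ℝ) (w : ℕ → E) (T : ℕ) :
    ∑ t ∈ Icc 1 T,
        ((F t (-(L t)) - F t (-(L (t - 1))) - ((-(L t)) - (-(L (t - 1)))) (w t))
          - F t (-(L t)) + F (t + 1) (-(L t)))
      = ∑ t ∈ Icc 1 T, ℓ t (w t) + (F (T + 1) (-(L T)) - F 1 (-(L 0))) := by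
  have hstep : ∀ t ∈ Icc 1 T, L t = L (t - 1) + ℓ t := by
    intro t ht
    obtain ⟨s, rfl⟩ : ∃ s, t = s + 1 := ⟨t - 1, by grind⟩
    rw [hL, hL, Nat.add_sub_cancel, sum_Icc_succ_top (by omega)]
  have hterm : ∀ t ∈ Icc 1 T,
      (F t (-(L t)) - F t (-(L (t - 1))) - ((-(L t)) - (-(L (t - 1)))) (w t))
          - F t (-(L t)) + F (t + 1) (-(L t))
        = ℓ t (w t) + (F (t + 1) (-(L (t + 1 - 1))) - F t (-(L (t - 1)))) := by
    intro t ht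
    have hdiff : ((-(L t)) - (-(L (t - 1)))) (w t) = -ℓ t (w t) := by
      rw [hstep t ht, neg_sub_neg, sub_add_cancel_left, neg_apply]
    rw [hdiff, Nat.add_sub_cancel]
    ring
  rw [sum_congr rfl hterm, sum_add_distrib, ← Ico_add_one_right_eq_Icc,
    sum_Ico_sub (f := fun t => F t (-(L (t - 1)))) (by omega)]
  rfl

end FTRL

theorem ftrl_regret_general {E : Type*} [NormedAddCommGroup E] [NormedSpace ℝ E]
    (K : Set E)
    (T : ℕ) (ℓ : ℕ → (E →L[ℝ] ℝ))
    (L : ℕ → (E →L[ℝ] ℝ)) (hL : ∀ t, L t = ∑ i ∈ Finset.Icc 1 t, ℓ i)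
    (R : ℕ → E → ℝ)
    (Rstar : ℕ → (E →L[ℝ] ℝ) → ℝ)
    (hRstar : ∀ t (l : E →L[ℝ] ℝ), Rstar t l = sSup ((fun w => l w - R t w) '' K))
    (w : ℕ → E)
    (hwmin : ∀ t ≥ 1, ∀ v ∈ K,
      (L (t - 1)) (w t) + R t (w t) ≤ (L (t - 1)) v + R t v)
    (u : E) (hu : u ∈ K) :
    ∑ t ∈ Finset.Icc 1 T, (ℓ t) (w t - u)
      ≤ R (T + 1) u + Rstar 1 0
        + ∑ t ∈ Finset.Icc 1 T,
            ((Rstar t (-(L t)) - Rstar t (-(L (t - 1)))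
              - ((-(L t)) - (-(L (t - 1)))) (w t))
             - Rstar t (-(L t)) + Rstar (t + 1) (-(L t))) := by
  have hL0 : L 0 = 0 := by simp [hL]
  have hregret : ∑ t ∈ Icc 1 T, ℓ t (w t - u) = ∑ t ∈ Icc 1 T, ℓ t (w t) - L T u := by
    simp only [map_sub, sum_sub_distrib, hL, _root_.sum_apply]
  have hfenchel : -L T u ≤ R (T + 1) u + Rstar (T + 1) (-(L T)) := by
    rw [hRstar]
    exact neg_apply_le_add_sSup_image_of_isMinOn (isMinOn_iff.2 (hwmin (T + 1) (by omega))) hu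
  rw [sum_bregman_add_conjugate_eq hL, hregret, hL0, neg_zero]
  linarith

/-- Lemma 3 (Regret of FTRL with varying regularizers): with `w_t` the FTRL minimizer of
`⟨L_{t-1}, ·⟩ + R_t` over `K`, `L_t = ℓ_1 + … + ℓ_t`, and `R_t` strongly convex lower
semicontinuous regularizers, the regret against any `u ∈ K` is bounded by
`R_{T+1}(u) + R_1*(0) + ∑_{t=1}^T [B_{R_t*}(-L_t, -L_{t-1}) - R_t*(-L_t) + R_{t+1}*(-L_t)]`,
where `R_t*` is the Fenchel conjugate over `K` and `∇R_t*(-L_{t-1}) = w_t`. -/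
theorem ftrl_regret {E : Type*} [NormedAddCommGroup E] [NormedSpace ℝ E]
    [FiniteDimensional ℝ E]
    (K : Set E) (hKne : K.Nonempty) (hKcl : IsClosed K) (hKconv : Convex ℝ K)
    (T : ℕ) (ℓ : ℕ → (E →L[ℝ] ℝ))
    (L : ℕ → (E →L[ℝ] ℝ)) (hL : ∀ t, L t = ∑ i ∈ Finset.Icc 1 t, ℓ i)
    (R : ℕ → E → ℝ)
    (hsc : ∀ t, ∃ lam > (0:ℝ), StrongConvexOn K lam (R t))
    (hlsc : ∀ t, LowerSemicontinuousOn (R t) K)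
    (Rstar : ℕ → (E →L[ℝ] ℝ) → ℝ)
    (hRstar : ∀ t (l : E →L[ℝ] ℝ), Rstar t l = sSup ((fun w => l w - R t w) '' K))
    (w : ℕ → E)
    (hwmem : ∀ t, w t ∈ K)
    (hwmin : ∀ t ≥ 1, ∀ v ∈ K,
      (L (t - 1)) (w t) + R t (w t) ≤ (L (t - 1)) v + R t v)
    (u : E) (hu : u ∈ K) :
    ∑ t ∈ Finset.Icc 1 T, (ℓ t) (w t - u)
      ≤ R (T + 1) u + Rstar 1 0
        + ∑ t ∈ Finset.Icc 1 T,
            ((Rstar t (-(L t)) - Rstar t (-(L (t - 1)))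
              - ((-(L t)) - (-(L (t - 1)))) (w t))
             - Rstar t (-(L t)) + Rstar (t + 1) (-(L t))) :=
  ftrl_regret_general K T ℓ L hL R Rstar hRstar w hwmin u hu
end

section
/- For d >= 2 and the sequence of T >= 120 loss vectors consisting of ceil(T/3) copies of -e_1 followed by floor(2T/3) copies of -e_2, the exponentiated-gradient iterates w_t with per-round learning rate 1/sqrt(t) on the probability simplex satisfy w_{t,2} <= 1/5 for all t >= ceil(T/3) + 1, where w_{t,j} is proportional to exp(-sum_{i=1}^{t-1} l_{i,j}/sqrt(i)). -/
/-!
After the first `c = ⌈T/3⌉` rounds coordinate 1 has accumulated the weight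
`A = ∑_{i ≤ c} 1/√i ≥ 2(√(c+1) - 1)`, and by round `t ≤ T ≤ 3c` coordinate 2 has only
accumulated `B = ∑_{c < i < t} 1/√i ≤ 2(√(3c-1) - √c)`. Since `c ≥ 40`, these estimates give
`A - B ≥ 3/2`, so `w_{t,2} / w_{t,1} = exp (B - A) ≤ exp (-3/2) < 1/4` and hence `w_{t,2} ≤ 1/5`.
-/

open Finset Real

lemma two_mul_sqrt_add_one_sub_sqrt_le_inv_sqrt {x : ℝ} (hx : 0 < x) :
    2 * (√(x + 1) - √x) ≤ 1 / √x := by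
  rw [le_div_iff₀ (sqrt_pos.mpr hx)]
  nlinarith [sq_sqrt hx.le, sq_sqrt (by linarith : 0 ≤ x + 1), sq_nonneg (√(x + 1) - √x)]

lemma inv_sqrt_add_one_le_two_mul_sqrt_add_one_sub_sqrt {x : ℝ} (hx : 0 ≤ x) :
    1 / √(x + 1) ≤ 2 * (√(x + 1) - √x) := by
  rw [div_le_iff₀ (sqrt_pos.mpr (by linarith))]
  nlinarith [sq_sqrt hx, sq_sqrt (by linarith : 0 ≤ x + 1), sq_nonneg (√(x + 1) - √x)]

lemma two_mul_sqrt_sub_le_sum_Ioc_inv_sqrt {m n : ℕ} (hmn : m ≤ n) :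
    2 * (√(n + 1) - √(m + 1)) ≤ ∑ i ∈ Ioc m n, 1 / √i := by
  induction n, hmn using Nat.le_induction with
  | base => simp
  | succ n hmn ih =>
    rw [sum_Ioc_succ_top hmn]
    have := two_mul_sqrt_add_one_sub_sqrt_le_inv_sqrt (x := n + 1) (by positivity)
    push_cast
    linarith

lemma sum_Ioc_inv_sqrt_le_two_mul_sqrt_sub {m n : ℕ} (hmn : m ≤ n) :
    ∑ i ∈ Ioc m n, 1 / √i ≤ 2 * (√n - √m) := by
  induction n, hmn using Nat.le_induction with
  | base => simp
  | succ n hmn ih =>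
    rw [sum_Ioc_succ_top hmn]
    have := inv_sqrt_add_one_le_two_mul_sqrt_add_one_sub_sqrt (x := n) (by positivity)
    push_cast
    linarith

lemma two_mul_sqrt_three_mul_sub_one_add_le {c : ℝ} (hc : 40 ≤ c) :
    2 * √(3 * c - 1) + 7 / 2 ≤ 2 * √(c + 1) + 2 * √c := by
  set z := √(3 * c - 1)
  have hz : z ^ 2 = 3 * c - 1 := sq_sqrt (by linarith)
  have hcc : √c ≤ √(c + 1) := sqrt_le_sqrt (by linarith)
  have hz_le : 14 * z ≤ 4 * c - 17 / 4 := by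
    nlinarith [sq_nonneg (14 * z - (4 * c - 17 / 4)), sqrt_nonneg (3 * c - 1)]
  have hrhs : 16 * c + 4 ≤ (2 * √(c + 1) + 2 * √c) ^ 2 := by
    nlinarith [sq_sqrt (by linarith : 0 ≤ c), sq_sqrt (by linarith : 0 ≤ c + 1),
      mul_le_mul_of_nonneg_left hcc (sqrt_nonneg c)]
  have hlhs : (2 * z + 7 / 2) ^ 2 ≤ 16 * c + 4 := by nlinarith
  exact (pow_le_pow_iff_left₀ (by positivity) (by positivity) two_ne_zero).mp (hlhs.trans hrhs)

lemma three_halves_le_sum_inv_sqrt_sub_sum_inv_sqrt {c s : ℕ} (hc : 40 ≤ c) (hcs : c ≤ s)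
    (hs : s + 1 ≤ 3 * c) :
    3 / 2 ≤ ∑ i ∈ Ioc 0 c, 1 / √i - ∑ i ∈ Ioc c s, 1 / √i := by
  have hA := two_mul_sqrt_sub_le_sum_Ioc_inv_sqrt c.zero_le
  rw [Nat.cast_zero, zero_add, sqrt_one] at hA
  have hs' : (s : ℝ) + 1 ≤ 3 * c := by exact_mod_cast hs
  have hsqrt : √(s : ℝ) ≤ √(3 * c - 1) := sqrt_le_sqrt (by linarith)
  linarith [sum_Ioc_inv_sqrt_le_two_mul_sqrt_sub hcs,
    two_mul_sqrt_three_mul_sub_one_add_le (c := c) (by exact_mod_cast hc)]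

lemma four_lt_exp_three_halves : 4 < exp (3 / 2) := by
  have h1 := exp_one_gt_d9
  have h2 : 1 / 2 + 1 ≤ exp (1 / 2) := add_one_le_exp _
  have h3 : exp (3 / 2) = exp 1 * exp (1 / 2) := by rw [← exp_add]; norm_num
  nlinarith

lemma sum_Ioc_eq_of_piecewise {f g : ℕ → ℝ} {a b n : ℕ} (hab : a ≤ b) (hbn : b ≤ n) {u v : ℝ}
    (hu : ∀ i ∈ Ioc a b, f i = u * g i) (hv : ∀ i ∈ Ioc b n, f i = v * g i) :
    ∑ i ∈ Ioc a n, f i = u * ∑ i ∈ Ioc a b, g i + v * ∑ i ∈ Ioc b n, g i := by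
  rw [← sum_Ioc_consecutive f hab hbn, sum_congr rfl hu, sum_congr rfl hv, mul_sum, mul_sum]

lemma div_sum_le_inv_one_add {ι : Type*} {s : Finset ι} {f : ι → ℝ} {i j : ι} {r : ℝ}
    (hf : ∀ k ∈ s, 0 ≤ f k) (hi : i ∈ s) (hj : j ∈ s) (hij : i ≠ j) (hr : 0 ≤ r)
    (h : r * f j ≤ f i) :
    f j / ∑ k ∈ s, f k ≤ 1 / (1 + r) := by
  have hsum := add_le_sum hf hi hj hij
  have hfi := hf i hi
  have hfj := hf j hj
  rcases hfj.eq_or_lt with h0 | hpos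
  · rw [← h0, zero_div]; positivity
  · rw [div_le_div_iff₀ (by linarith) (by linarith)]
    nlinarith

/-- Key step in the second Mirror Descent counter-example: for the sequence of losses
consisting of `⌈T/3⌉` copies of `-e_1` followed by copies of `-e_2`, the
exponentiated-gradient (multiplicative weights) iterates on the probability simplex with
learning rates `1/√t` satisfy `w_{t,2} ≤ 1/5` for all `⌈T/3⌉ + 1 ≤ t ≤ T` when `T ≥ 120`. -/
theorem eg_second_coordinate_small (d T : ℕ) (hd : 2 ≤ d) (hT : 120 ≤ T)
    (c : ℕ) (hc : c = (T + 2) / 3)  -- `c = ⌈T/3⌉`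
    (ℓ : ℕ → ℕ → ℝ)
    (hℓ : ∀ i j, ℓ i j =
      if j = 1 ∧ i ≤ c then (-1 : ℝ) else if j = 2 ∧ c < i then (-1 : ℝ) else 0)
    (w : ℕ → ℕ → ℝ)
    (hw : ∀ t j, w t j =
      Real.exp (-∑ i ∈ Finset.Icc 1 (t - 1), ℓ i j / Real.sqrt i)
        / ∑ k ∈ Finset.Icc 1 d,
            Real.exp (-∑ i ∈ Finset.Icc 1 (t - 1), ℓ i k / Real.sqrt i))
    (t : ℕ) (ht1 : c + 1 ≤ t) (ht2 : t ≤ T) :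
    w t 2 ≤ 1 / 5 := by
  have hct : c ≤ t - 1 := by omega
  set A := ∑ i ∈ Ioc 0 c, 1 / √i
  set B := ∑ i ∈ Ioc c (t - 1), 1 / √i
  have hIcc : Icc 1 (t - 1) = Ioc 0 (t - 1) := Icc_add_one_left_eq_Ioc 0 _
  have hloss₁ : ∑ i ∈ Icc 1 (t - 1), ℓ i 1 / √i = -A := by
    rw [hIcc, sum_Ioc_eq_of_piecewise (u := -1) (v := 0) (g := fun i => 1 / √i) c.zero_le hct]
    · ring
    all_goals intro i hi; simp only [mem_Ioc] at hi; simp [hℓ, hi.2, not_le.mpr hi.1, neg_div]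
  have hloss₂ : ∑ i ∈ Icc 1 (t - 1), ℓ i 2 / √i = -B := by
    rw [hIcc, sum_Ioc_eq_of_piecewise (u := 0) (v := -1) (g := fun i => 1 / √i) c.zero_le hct]
    · ring
    all_goals intro i hi; simp only [mem_Ioc] at hi; simp [hℓ, hi.1, not_lt.mpr hi.2, neg_div]
  have hgap : 3 / 2 ≤ A - B :=
    three_halves_le_sum_inv_sqrt_sub_sum_inv_sqrt (by omega) hct (by omega)
  have hratio : 4 * exp B ≤ exp A := calc
    4 * exp B ≤ exp (3 / 2) * exp B := by gcongr; exact four_lt_exp_three_halves.le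
    _ ≤ exp A := by rw [← exp_add]; gcongr; linarith
  rw [hw]
  have := div_sum_le_inv_one_add (s := Icc 1 d) (i := 1) (j := 2) (r := 4)
    (f := fun k => exp (-∑ i ∈ Icc 1 (t - 1), ℓ i k / √i)) (fun k _ => (exp_pos _).le)
    (by simp; omega) (by simp; omega) (by norm_num) (by norm_num)
    (by simpa only [hloss₁, hloss₂, neg_neg] using hratio)
  exact this.trans_eq (by norm_num)
end
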